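/- Fix y ∈ ℕ and let φ(f) = λ^y e^{−λ}/y! with λ = e^f (the exponential link). Then for all f ∈ ℝ: 0 ≤ φ(f) ≤ 1, the first derivative satisfies −(y+1) ≤ φ'(f) ≤ y, and the second derivative satisfies −(y + 1/4) ≤ φ''(f) ≤ 2y² + 3y + 2. -/

import Mathlib

/-!
With `t = e^f` the likelihood is the Poisson weight `p_y(t) = t^y e^{-t} / y!` (`poissonTerm`),
and `φ' = p_y(t) (y - t)`, `φ'' = p_y(t) ((y - t)² - t)`. Every bound follows from
`0 ≤ p_k(t) ≤ 1` (as `t^k / k! ≤ e^t`) together with `p_k(t) t = (k + 1) p_{k+1}(t)`,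
which absorbs the powers of the unbounded factor `t` into further Poisson weights.
-/

open Real

noncomputable def poissonTerm (k : ℕ) (t : ℝ) : ℝ := t ^ k * exp (-t) / k.factorial

section Weight

variable (k : ℕ) {t : ℝ}

lemma poissonTerm_nonneg (ht : 0 ≤ t) : 0 ≤ poissonTerm k t := by
  unfold poissonTerm; positivity

lemma poissonTerm_le_one (ht : 0 ≤ t) : poissonTerm k t ≤ 1 := by
  have hk : (0 : ℝ) < k.factorial := by positivity
  have h := pow_div_factorial_le_exp t ht k
  rw [div_le_iff₀ hk] at h
  rw [poissonTerm, div_le_one hk, exp_neg, ← div_eq_mul_inv, div_le_iff₀ (exp_pos t)]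
  linarith

variable (t)

lemma poissonTerm_mul_rate : poissonTerm k t * t = (k + 1) * poissonTerm (k + 1) t := by
  simp only [poissonTerm, Nat.factorial_succ, pow_succ, Nat.cast_mul, Nat.cast_succ]
  field_simp

lemma poissonTerm_mul_rate_sq :
    poissonTerm k t * t ^ 2 = (k + 1) * ((k + 2) * poissonTerm (k + 2) t) := by
  rw [sq, ← mul_assoc, poissonTerm_mul_rate, mul_assoc, poissonTerm_mul_rate]
  push_cast
  ring

lemma poissonTerm_exp (f : ℝ) : poissonTerm k (exp f) = exp (k * f - exp f) / k.factorial := by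
  rw [poissonTerm, exp_sub, exp_nat_mul, exp_neg]
  ring

end Weight

section Derivatives

variable (k : ℕ)

lemma hasDerivAt_poissonTerm_exp (f : ℝ) :
    HasDerivAt (fun f ↦ poissonTerm k (exp f)) (poissonTerm k (exp f) * (k - exp f)) f := by
  have hexponent : HasDerivAt (fun x ↦ k * x - exp x) (k - exp f) f := by
    simpa using ((hasDerivAt_id f).const_mul (k : ℝ)).fun_sub (hasDerivAt_exp f)
  simp only [poissonTerm_exp]
  exact (hexponent.exp.div_const _).congr_deriv (by ring)

lemma deriv_poissonTerm_exp :
    deriv (fun f ↦ poissonTerm k (exp f)) = fun f ↦ poissonTerm k (exp f) * (k - exp f) :=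
  funext fun f ↦ (hasDerivAt_poissonTerm_exp k f).deriv

lemma deriv_deriv_poissonTerm_exp :
    deriv (deriv fun f ↦ poissonTerm k (exp f)) =
      fun f ↦ poissonTerm k (exp f) * ((k - exp f) ^ 2 - exp f) := by
  rw [deriv_poissonTerm_exp]
  exact funext fun f ↦ (((hasDerivAt_poissonTerm_exp k f).mul
    ((hasDerivAt_exp f).const_sub (k : ℝ))).congr_deriv (by ring)).deriv

end Derivatives

section Bounds

variable (k : ℕ) {t : ℝ}

lemma poissonTerm_mul_sub_le (ht : 0 ≤ t) : poissonTerm k t * (k - t) ≤ k := by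
  have h0 := poissonTerm_nonneg k ht
  have h1 := poissonTerm_le_one k ht
  nlinarith

lemma neg_succ_le_poissonTerm_mul_sub (ht : 0 ≤ t) :
    -((k : ℝ) + 1) ≤ poissonTerm k t * (k - t) := by
  have h0 := poissonTerm_nonneg k ht
  have h1 := poissonTerm_le_one (k + 1) ht
  have hrec := poissonTerm_mul_rate k t
  have hk : (0 : ℝ) ≤ k := k.cast_nonneg
  nlinarith

lemma neg_le_poissonTerm_mul_sq_sub_sub (ht : 0 ≤ t) :
    -((k : ℝ) + 1 / 4) ≤ poissonTerm k t * ((k - t) ^ 2 - t) := by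
  have h0 := poissonTerm_nonneg k ht
  have h1 := poissonTerm_le_one k ht
  -- `(k - t)² - t = (t - k - 1/2)² - (k + 1/4)`
  have hq : -((k : ℝ) + 1 / 4) ≤ (k - t) ^ 2 - t := by nlinarith [sq_nonneg (t - k - 1 / 2)]
  nlinarith

lemma poissonTerm_mul_sq_sub_sub_le (ht : 0 ≤ t) :
    poissonTerm k t * ((k - t) ^ 2 - t) ≤ 2 * (k : ℝ) ^ 2 + 3 * k + 2 := by
  have h0 := poissonTerm_nonneg k ht
  have h1 := poissonTerm_le_one k ht
  have h2 := poissonTerm_le_one (k + 2) ht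
  have hsq := poissonTerm_mul_rate_sq k t
  have hk : (0 : ℝ) ≤ k := k.cast_nonneg
  calc poissonTerm k t * ((k - t) ^ 2 - t)
      ≤ poissonTerm k t * k ^ 2 + poissonTerm k t * t ^ 2 := by nlinarith [mul_nonneg h0 ht]
    _ ≤ (k : ℝ) ^ 2 + (k + 1) * (k + 2) := by nlinarith
    _ = 2 * (k : ℝ) ^ 2 + 3 * k + 2 := by ring

end Bounds

/-- Bounds for the Poisson likelihood with exponential link `λ = e^f`,
`φ(f) = λ^y e^{−λ} / y!`: `0 ≤ φ ≤ 1`, `−(y+1) ≤ φ' ≤ y` and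
`−(y + 1/4) ≤ φ'' ≤ 2y² + 3y + 2`. -/
theorem poisson_exp_likelihood_derivative_bounds
    (y : ℕ)
    (φ : ℝ → ℝ)
    (hφ : ∀ f : ℝ, φ f = Real.exp f ^ y * Real.exp (-Real.exp f) / (Nat.factorial y : ℝ)) :
    ∀ f : ℝ,
      (0 ≤ φ f ∧ φ f ≤ 1) ∧
      (-((y : ℝ) + 1) ≤ deriv φ f ∧ deriv φ f ≤ (y : ℝ)) ∧
      (-((y : ℝ) + 1 / 4) ≤ deriv (deriv φ) f ∧
        deriv (deriv φ) f ≤ 2 * (y : ℝ) ^ 2 + 3 * (y : ℝ) + 2) := by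
  obtain rfl : φ = fun f ↦ poissonTerm y (exp f) := funext hφ
  intro f
  have ht := (exp_pos f).le
  rw [deriv_deriv_poissonTerm_exp, deriv_poissonTerm_exp]
  exact ⟨⟨poissonTerm_nonneg y ht, poissonTerm_le_one y ht⟩,
    ⟨neg_succ_le_poissonTerm_mul_sub y ht, poissonTerm_mul_sub_le y ht⟩,
    ⟨neg_le_poissonTerm_mul_sq_sub_sub y ht, poissonTerm_mul_sq_sub_sub_le y ht⟩⟩
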